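/- arXiv:math/0211008 — 4 statements merged into one kernel-verified Lean document; each statement's English description precedes it below -/
import Mathlib

section
/- Let R be a Noetherian commutative ring of prime characteristic p, let a and b be ideals of R, and let N be a submodule of an R-module M. Then the ab-tight closure satisfies N^{*ab}_M ⊆ (N^{*a}_M :_M b); moreover, if b is a principal ideal, then equality holds: N^{*ab}_M = (N^{*a}_M :_M b). -/
open TensorProduct

universe u v

section TightClosureBasics

variable (R : Type u) [CommRing R]

/-- `R°`: the set of elements of `R` not contained in any minimal prime ideal. -/
def Rcirc : Set R := {c | ∀ P ∈ minimalPrimes R, c ∉ P}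

/-- `I^{[q]}`: the ideal generated by the `q`-th powers of elements of `I`. -/
def idealBracketPow (I : Ideal R) (q : ℕ) : Ideal R :=
  Ideal.span ((fun x => x ^ q) '' (I : Set R))

/-- The `a`-tight closure `I^{*a}` of an ideal `I ⊆ R` (as a subset of `R`):
all `z` such that for some `c ∈ R°` one has `c z^q a^q ⊆ I^{[q]}` for all `q = p^e ≫ 0`. -/
def idealTC (p : ℕ) (a I : Ideal R) : Set R :=
  {z | ∃ c ∈ Rcirc R, ∃ e₀ : ℕ, ∀ e, e₀ ≤ e → ∀ α ∈ a ^ p ^ e,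
    c * z ^ p ^ e * α ∈ idealBracketPow R I (p ^ e)}

variable (p : ℕ) [Fact p.Prime] [CharP R p]

/-- `ᵉR`: the ring `R` viewed as an `R`-algebra via the `e`-fold Frobenius
`x ↦ x ^ p ^ e`. -/
def FrobAlg (_p _e : ℕ) : Type u := R

instance (e : ℕ) : CommRing (FrobAlg R p e) := inferInstanceAs (CommRing R)

noncomputable instance (e : ℕ) : Algebra R (FrobAlg R p e) :=
  RingHom.toAlgebra (iterateFrobenius R p e)

/-- The Frobenius functor `F^e(M) = ᵉR ⊗_R M`, an `R`-module via the left factor. -/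
def FrobPow (e : ℕ) (M : Type v) [AddCommGroup M] [Module R M] : Type (max u v) :=
  TensorProduct R (FrobAlg R p e) M

variable {M : Type v} [AddCommGroup M] [Module R M]

noncomputable instance (e : ℕ) : AddCommGroup (FrobPow R p e M) :=
  inferInstanceAs (AddCommGroup (TensorProduct R (FrobAlg R p e) M))

noncomputable instance (e : ℕ) : Module R (FrobPow R p e M) :=
  inferInstanceAs (Module (FrobAlg R p e) (TensorProduct R (FrobAlg R p e) M))

/-- The `e`-times iterated Frobenius map `M → F^e(M)`, `z ↦ z^q := 1 ⊗ z`. -/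
noncomputable def frobM (e : ℕ) (z : M) : FrobPow R p e M :=
  (1 : FrobAlg R p e) ⊗ₜ[R] z

/-- `N^{[q]}_M`: the image of `F^e(N) → F^e(M)`, i.e. the `R`-span of the image of
`N` under the Frobenius map `M → F^e(M)`. -/
noncomputable def bracketPow (e : ℕ) (N : Submodule R M) : Submodule R (FrobPow R p e M) :=
  Submodule.span R (frobM R p e '' (N : Set M))

/-- The `a`-tight closure `N^{*a}_M` of a submodule `N ⊆ M`: all `z ∈ M` such that for
some `c ∈ R°` one has `c z^q a^q ⊆ N^{[q]}_M` for all `q = p^e ≫ 0`. -/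
noncomputable def modTC (a : Ideal R) (N : Submodule R M) : Set M :=
  {z | ∃ c ∈ Rcirc R, ∃ e₀ : ℕ, ∀ e, e₀ ≤ e → ∀ α ∈ a ^ p ^ e,
    (c * α) • frobM R p e z ∈ bracketPow R p e N}

/-- The annihilator ideal of a subset of a module. -/
def setAnn (S : Set M) : Ideal R where
  carrier := {r | ∀ z ∈ S, r • z = 0}
  add_mem' := by
    intro r s hr hs z hz
    rw [add_smul, hr z hz, hs z hz, add_zero]
  zero_mem' := by
    intro z _
    rw [zero_smul]
  smul_mem' := by
    intro c r hr z hz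
    rw [smul_eq_mul, mul_smul, hr z hz, smul_zero]

/-- `τ(a)`: the intersection, over all finitely generated `R`-modules `M`, of
`Ann_R (0^{*a}_M)`. -/
noncomputable def tauIdeal (a : Ideal R) : Ideal R where
  carrier := {r | ∀ (N : Type u) [AddCommGroup N] [Module R N], Module.Finite R N →
      ∀ z ∈ modTC R p a (⊥ : Submodule R N), r • z = 0}
  add_mem' := by
    intro r s hr hs N _ _ hN z hz
    rw [add_smul, hr N hN z hz, hs N hN z hz, add_zero]
  zero_mem' := by
    intro N _ _ _ z _
    rw [zero_smul]
  smul_mem' := by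
    intro c r hr N _ _ hN z hz
    rw [smul_eq_mul, mul_smul, hr N hN z hz, smul_zero]

end TightClosureBasics

section RegularExcellent

/-- A regular local ring: a Noetherian local ring whose maximal ideal can be generated
by `dim R` elements. -/
def IsRegularLocal (A : Type v) [CommRing A] : Prop :=
  ∃ h : IsLocalRing A, letI := h
  IsNoetherianRing A ∧
    ∃ s : Finset A, Ideal.span (s : Set A) = IsLocalRing.maximalIdeal A ∧
      (s.card : WithBot ℕ∞) = ringKrullDim A

/-- A `k`-algebra `C` over a field `k` is geometrically regular if for every finite field
extension `k'` of `k` all localizations of `k' ⊗_k C` at primes are regular local rings. -/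
def IsGeometricallyRegular (k : Type u) (C : Type u) [Field k] [CommRing C] [Algebra k C] :
    Prop :=
  ∀ (k' : Type u) [Field k'] [Algebra k k'], Module.Finite k k' →
    ∀ (Q : Ideal (TensorProduct k k' C)) (hQ : Q.IsPrime), letI := hQ
      IsRegularLocal (Localization.AtPrime Q)

/-- `A` is a G-ring (Grothendieck ring): for every prime `P` of `A` the fibres of the
completion map `A_P → (A_P)^` are geometrically regular. -/
def IsGRing (A : Type u) [CommRing A] : Prop :=
  ∀ (P : Ideal A) (hP : P.IsPrime), letI := hP
    ∀ (Q : Ideal (Localization.AtPrime P)) (hQ : Q.IsPrime), letI := hQ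
      IsGeometricallyRegular
        (IsLocalRing.ResidueField (Localization.AtPrime Q))
        (TensorProduct (Localization.AtPrime P)
          (IsLocalRing.ResidueField (Localization.AtPrime Q))
          (AdicCompletion (IsLocalRing.maximalIdeal (Localization.AtPrime P))
            (Localization.AtPrime P)))

/-- A ring is catenary if any two saturated chains of primes with the same endpoints
have the same length. -/
def IsCatenary (A : Type*) [CommRing A] : Prop :=
  ∀ c d : LTSeries (PrimeSpectrum A),
    (∀ i : Fin c.length, c.toFun i.castSucc ⋖ c.toFun i.succ) →
    (∀ i : Fin d.length, d.toFun i.castSucc ⋖ d.toFun i.succ) →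
    c.head = d.head → c.last = d.last → c.length = d.length

/-- `A` is J-2: the regular locus of every finitely generated `A`-algebra is open. -/
def IsJ2 (A : Type u) [CommRing A] : Prop :=
  ∀ (n : ℕ) (I : Ideal (MvPolynomial (Fin n) A)),
    IsOpen {P : PrimeSpectrum (MvPolynomial (Fin n) A ⧸ I) |
      IsRegularLocal (Localization.AtPrime P.asIdeal)}

/-- An excellent ring: a Noetherian, universally catenary G-ring satisfying J-2. -/
def IsExcellent (A : Type u) [CommRing A] : Prop :=
  IsNoetherianRing A ∧ (∀ n : ℕ, IsCatenary (MvPolynomial (Fin n) A)) ∧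
    IsGRing A ∧ IsJ2 A

/-- A ring is equidimensional if all its minimal primes have the same dimension. -/
def IsEquidimensional (A : Type*) [CommRing A] : Prop :=
  ∀ P ∈ minimalPrimes A, ringKrullDim (A ⧸ P) = ringKrullDim A

end RegularExcellent

section Misc

variable (R : Type u) [CommRing R]

/-- `x : Fin n → A` is a system of parameters of the local ring `A`: `n = dim A` and
the `x i` generate an ideal primary to the maximal ideal. -/
def IsSOP (A : Type v) [CommRing A] [IsLocalRing A] (n : ℕ) (x : Fin n → A) : Prop :=
  (n : WithBot ℕ∞) = ringKrullDim A ∧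
    (Ideal.span (Set.range x)).radical = IsLocalRing.maximalIdeal A

/-- A local ring is F-rational if every ideal generated by a system of parameters is
tightly closed. -/
def IsFRational (A : Type v) [CommRing A] [IsLocalRing A] (p : ℕ) : Prop :=
  ∀ (n : ℕ) (x : Fin n → A), IsSOP A n x →
    idealTC A p ⊤ (Ideal.span (Set.range x)) = (Ideal.span (Set.range x) : Set A)

/-- The tight integral closure `{I_1, …, I_n}^{⎯*}` of a family of ideals. -/
def tightIntClosure (p : ℕ) {n : ℕ} (I : Fin n → Ideal R) : Set R :=
  {x | ∃ c ∈ Rcirc R, ∃ e₀ : ℕ, ∀ e, e₀ ≤ e → c * x ^ p ^ e ∈ ∑ i, (I i) ^ p ^ e}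

/-- The integral closure of an ideal `J`: all elements satisfying an integral equation
`x^n + a_1 x^{n-1} + ⋯ + a_n = 0` with `a_i ∈ J^i`. -/
def integralClosureOfIdeal (J : Ideal R) : Set R :=
  {x | ∃ n : ℕ, 0 < n ∧ ∃ a : ℕ → R, (∀ i ∈ Finset.range n, a i ∈ J ^ (i + 1)) ∧
    x ^ n + ∑ i ∈ Finset.range n, a i * x ^ (n - 1 - i) = 0}

/-- `x_1, …, x_n` are parameters: the ideal generated by the first `i` of them has
height at least `i`, for each `i`. -/
def AreParameters {n : ℕ} (x : Fin n → R) : Prop :=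
  ∀ i : ℕ, i ≤ n → ∀ (P : Ideal R) (hP : P.IsPrime),
    Ideal.span (x '' {j : Fin n | (j : ℕ) < i}) ≤ P →
      (i : ℕ∞) ≤ Order.height (⟨P, hP⟩ : PrimeSpectrum R)

/-- A regular sequence: each `x i` is a non-zerodivisor modulo its predecessors. -/
def IsRegSeq {n : ℕ} (x : Fin n → R) : Prop :=
  ∀ i : Fin n, ∀ z : R,
    x i * z ∈ Ideal.span (x '' {j : Fin n | j < i}) →
      z ∈ Ideal.span (x '' {j : Fin n | j < i})

/-- A prime ideal of height one. -/
def IsHeightOnePrime (P : Ideal R) : Prop :=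
  ∃ hP : P.IsPrime, Order.height (⟨P, hP⟩ : PrimeSpectrum R) = 1

/-- The `r`-th symbolic power of a (divisorial) ideal `J` in a normal domain:
the intersection of the height-one primary components `J^r R_P ∩ R`. -/
def symbolicPow (J : Ideal R) (r : ℕ) : Ideal R where
  carrier := {x | ∀ P : Ideal R, IsHeightOnePrime R P → ∃ s ∉ P, s * x ∈ J ^ r}
  zero_mem' := by
    intro P hP
    obtain ⟨hP', -⟩ := hP
    exact ⟨1, (Ideal.ne_top_iff_one P).mp hP'.ne_top, by simp⟩
  add_mem' := by
    intro x y hx hy P hP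
    obtain ⟨s, hs, hsx⟩ := hx P hP
    obtain ⟨t, ht, hty⟩ := hy P hP
    obtain ⟨hP', -⟩ := hP
    refine ⟨s * t, fun hmem => ?_, ?_⟩
    · rcases hP'.mem_or_mem hmem with h | h
      · exact hs h
      · exact ht h
    · have heq : s * t * (x + y) = t * (s * x) + s * (t * y) := by ring
      rw [heq]
      exact Ideal.add_mem _ (Ideal.mul_mem_left _ _ hsx) (Ideal.mul_mem_left _ _ hty)
  smul_mem' := by
    intro c x hx P hP
    obtain ⟨s, hs, hsx⟩ := hx P hP
    refine ⟨s, hs, ?_⟩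
    have heq : s * (c • x) = c * (s * x) := by
      simp only [smul_eq_mul]; ring
    rw [heq]
    exact Ideal.mul_mem_left _ _ hsx

/-- Data of an injective hull `E = E_A(A/m)` of the residue field of a local ring:
an injective module together with an essential embedding of the residue field. -/
structure InjectiveHullRF (A : Type u) [CommRing A] [IsLocalRing A] where
  E : Type u
  [acg : AddCommGroup E]
  [mod : Module A E]
  injective : Module.Injective A E
  emb : (A ⧸ IsLocalRing.maximalIdeal A) →ₗ[A] E
  emb_inj : Function.Injective emb
  essential : ∀ N : Submodule A E, N ≠ ⊥ → N ⊓ LinearMap.range emb ≠ ⊥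

attribute [instance] InjectiveHullRF.acg InjectiveHullRF.mod

/-- `ω` is a canonical ideal of the local ring `A`: an ideal whose Matlis dual is the
top local cohomology module `H^d_m(A)`. -/
def IsCanonicalIdeal (A : Type u) [CommRing A] [IsLocalRing A] (ω : Ideal A) : Prop :=
  ∃ d : ℕ, ringKrullDim A = d ∧
    ∃ hull : InjectiveHullRF A,
      Nonempty ((ω →ₗ[A] hull.E) ≃ₗ[A]
        ((localCohomology (IsLocalRing.maximalIdeal A) d).obj (ModuleCat.of A A)))

/-- A normal local ring is `ℚ`-Gorenstein if it admits a canonical module (here realized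
as a canonical ideal `ω`) some symbolic power `ω^{(r)}`, `r ≥ 1`, of which is principal,
i.e. isomorphic to `A`. -/
def IsQGorenstein (A : Type u) [CommRing A] [IsLocalRing A] : Prop :=
  ∃ ω : Ideal A, ω ≠ ⊥ ∧ IsCanonicalIdeal A ω ∧
    ∃ r : ℕ, 1 ≤ r ∧ ∃ f : A, symbolicPow A ω r = Ideal.span {f}

variable (p : ℕ) [Fact p.Prime] [CharP R p]

/-- `ᵉR` as an `R`-module via restriction of scalars along the `e`-fold Frobenius:
`r • x = r ^ (p ^ e) * x`. -/
def FrobRestrict (_p _e : ℕ) : Type u := R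

instance (e : ℕ) : AddCommGroup (FrobRestrict R p e) := inferInstanceAs (AddCommGroup R)

noncomputable instance (e : ℕ) : Module R (FrobRestrict R p e) :=
  Module.compHom R (iterateFrobenius R p e)

/-- `R` is F-finite: `¹R` is a finitely generated `R`-module. -/
def IsFFinite : Prop := Module.Finite R (FrobRestrict R p 1)

/-- A reduced ring `A` of characteristic `p` is strongly F-regular if for every
`c ∈ A°` there is `q = p^e` such that the inclusion `c^{1/q} A ⊆ A^{1/q}` splits
`A`-linearly; equivalently (identifying `A^{1/q}` with `A` via the `q`-th power map)
there is an additive map `φ : A → A` with `φ (r^q * x) = r * φ x` for all `r, x` and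
`φ c = 1`. -/
def StronglyFRegular (A : Type v) [CommRing A] (p : ℕ) : Prop :=
  ∀ c ∈ Rcirc A, ∃ e : ℕ, ∃ φ : A →+ A,
    (∀ r x : A, φ (r ^ p ^ e * x) = r * φ x) ∧ φ c = 1

/-- `c` is an `a`-test element: `c ∈ R°` and `c z^q a^q ⊆ I^{[q]}` for every ideal `I`,
every `z ∈ I^{*a}` and every `q = p^e`. -/
def IsTestElementFor (a : Ideal R) (c : R) : Prop :=
  c ∈ Rcirc R ∧
    ∀ I : Ideal R, ∀ z ∈ idealTC R p a I, ∀ e : ℕ, ∀ α ∈ a ^ p ^ e,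
      c * z ^ p ^ e * α ∈ idealBracketPow R I (p ^ e)

end Misc

/-- The identity map `R → ᵉR`. -/
def toFrob (R : Type u) [CommRing R] (p e : ℕ) : R → FrobAlg R p e := id

lemma frobM_smul (R : Type u) [CommRing R] (p : ℕ) [Fact p.Prime] [CharP R p]
    {M : Type v} [AddCommGroup M] [Module R M] (e : ℕ) (y : R) (z : M) :
    frobM R p e (y • z) = (y ^ p ^ e) • frobM R p e z := by
  have h1 : frobM R p e (y • z) = (y • (1 : FrobAlg R p e)) ⊗ₜ[R] z := by
    rw [frobM, ← TensorProduct.smul_tmul]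
  have h2 : (y ^ p ^ e) • frobM R p e z
      = (toFrob R p e (y ^ p ^ e) * 1) ⊗ₜ[R] z := rfl
  have h3 : y • (1 : FrobAlg R p e) = toFrob R p e (iterateFrobenius R p e y) * 1 := rfl
  rw [h1, h2, h3, iterateFrobenius_def]

/-- **Proposition 1.3(3).** For ideals `a`, `b` of a Noetherian ring `R` of prime
characteristic `p` and a submodule `N ⊆ M`, one has `N^{*ab}_M ⊆ (N^{*a}_M :_M b)`;
if `b` is principal, equality holds. -/
theorem mul_tight_closure_subset_colon_and_eq_of_principal
    (R : Type u) [CommRing R] [IsNoetherianRing R]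
    (p : ℕ) [Fact p.Prime] [CharP R p]
    (a b : Ideal R) (M : Type v) [AddCommGroup M] [Module R M] (N : Submodule R M) :
    modTC R p (a * b) N ⊆ {z : M | ∀ y ∈ b, y • z ∈ modTC R p a N} ∧
    ((∃ f : R, b = Ideal.span {f}) →
      modTC R p (a * b) N = {z : M | ∀ y ∈ b, y • z ∈ modTC R p a N}) := by
  have hsub : modTC R p (a * b) N ⊆ {z : M | ∀ y ∈ b, y • z ∈ modTC R p a N} := by
    rintro z ⟨c, hc, e₀, h⟩ y hy
    refine ⟨c, hc, e₀, fun e he α hα => ?_⟩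
    rw [frobM_smul]
    have hmem : α * y ^ p ^ e ∈ (a * b) ^ p ^ e := by
      rw [mul_pow]
      exact Ideal.mul_mem_mul hα (Ideal.pow_mem_pow hy _)
    have := h e he (α * y ^ p ^ e) hmem
    rwa [show (c * (α * y ^ p ^ e)) • frobM R p e z
        = (c * α) • (y ^ p ^ e) • frobM R p e z by
      rw [← mul_smul]; ring_nf] at this
  refine ⟨hsub, fun ⟨f, hf⟩ => ?_⟩
  refine le_antisymm hsub ?_
  intro z hz
  have hfb : f ∈ b := hf ▸ Ideal.mem_span_singleton_self f
  obtain ⟨c, hc, e₀, h⟩ := hz f hfb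
  refine ⟨c, hc, e₀, fun e he β hβ => ?_⟩
  have hβ' : β ∈ a ^ p ^ e * Ideal.span {f ^ p ^ e} := by
    rwa [← Ideal.span_singleton_pow, ← hf, ← mul_pow]
  rw [Ideal.mem_mul_span_singleton] at hβ'
  obtain ⟨γ, hγ, rfl⟩ := hβ'
  have := h e he γ hγ
  rw [frobM_smul] at this
  rwa [show (c * (γ * f ^ p ^ e)) • frobM R p e z
      = (c * γ) • (f ^ p ^ e) • frobM R p e z by
    rw [← mul_smul]; ring_nf]
end

section
/- Let R be a Noetherian commutative ring of prime characteristic p, let a and b be ideals of R with b ⊆ a, and let N be a submodule of an R-module M. Then N^{*a}_M ⊆ N^{*b}_M. Moreover, if a ∩ R° ≠ ∅ and b is a reduction of a, then N^{*a}_M = N^{*b}_M. -/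
open TensorProduct

universe u v

/-! The inclusion is immediate from `b ^ q ⊆ a ^ q`. For the reverse one, pick `d ∈ a ∩ R°`:
from `a ^ (n + 1) = b a ^ n` we get `d ^ n a ^ q ⊆ a ^ (n + q) = b ^ q a ^ n ⊆ b ^ q`, so a
multiplier `c` witnessing `z ∈ N^{*b}_M` turns into the multiplier `c d ^ n ∈ R°` witnessing
`z ∈ N^{*a}_M`. -/

section TightClosureReduction

variable {R : Type u} [CommRing R]

theorem mul_mem_Rcirc {c d : R} (hc : c ∈ Rcirc R) (hd : d ∈ Rcirc R) : c * d ∈ Rcirc R :=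
  fun P hP hcd => (hP.1.1.mem_or_mem hcd).elim (hc P hP) (hd P hP)

theorem pow_mem_Rcirc {d : R} (hd : d ∈ Rcirc R) (n : ℕ) : d ^ n ∈ Rcirc R :=
  fun P hP hdn => hd P hP (hP.1.1.mem_of_pow_mem n hdn)

theorem Ideal.pow_add_eq_pow_mul_of_reduction {a b : Ideal R} {n : ℕ}
    (hred : a ^ (n + 1) = b * a ^ n) (k : ℕ) : a ^ (n + k) = b ^ k * a ^ n := by
  induction k with
  | zero => simp
  | succ k ih =>
    calc a ^ (n + (k + 1)) = a * a ^ (n + k) := by ring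
      _ = b ^ k * a ^ (n + 1) := by rw [ih]; ring
      _ = b ^ (k + 1) * a ^ n := by rw [hred]; ring

theorem Ideal.pow_mul_pow_le_of_reduction {a b : Ideal R} {n : ℕ}
    (hred : a ^ (n + 1) = b * a ^ n) (k : ℕ) : a ^ n * a ^ k ≤ b ^ k := by
  rw [← pow_add, Ideal.pow_add_eq_pow_mul_of_reduction hred]
  exact Ideal.mul_le_left

variable (p : ℕ) [Fact p.Prime] [CharP R p]
variable {M : Type v} [AddCommGroup M] [Module R M] (N : Submodule R M)

theorem modTC_anti {a b : Ideal R} (hba : b ≤ a) : modTC R p a N ⊆ modTC R p b N := by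
  rintro z ⟨c, hc, e₀, h⟩
  exact ⟨c, hc, e₀, fun e he α hα => h e he α (Ideal.pow_right_mono hba _ hα)⟩

theorem modTC_subset_of_forall_mul_mem_pow {a b : Ideal R} {d : R} (hd : d ∈ Rcirc R)
    (hdab : ∀ k, ∀ α ∈ a ^ k, d * α ∈ b ^ k) : modTC R p b N ⊆ modTC R p a N := by
  rintro z ⟨c, hc, e₀, h⟩
  refine ⟨c * d, mul_mem_Rcirc hc hd, e₀, fun e he α hα => ?_⟩
  rw [mul_assoc]
  exact h e he (d * α) (hdab _ α hα)

theorem modTC_eq_of_reduction {a b : Ideal R} (hba : b ≤ a) {d : R} (hda : d ∈ a)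
    (hd : d ∈ Rcirc R) {n : ℕ} (hred : a ^ (n + 1) = b * a ^ n) :
    modTC R p a N = modTC R p b N := by
  refine (modTC_anti p N hba).antisymm
    (modTC_subset_of_forall_mul_mem_pow p N (pow_mem_Rcirc hd n) fun k α hα => ?_)
  exact Ideal.pow_mul_pow_le_of_reduction hred k (Ideal.mul_mem_mul (Ideal.pow_mem_pow hda n) hα)

end TightClosureReduction

theorem tight_closure_antitone_and_eq_of_reduction_general
    (R : Type u) [CommRing R]
    (p : ℕ) [Fact p.Prime] [CharP R p]
    (a b : Ideal R) (hba : b ≤ a)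
    (M : Type v) [AddCommGroup M] [Module R M] (N : Submodule R M) :
    modTC R p a N ⊆ modTC R p b N ∧
    (((a : Set R) ∩ Rcirc R).Nonempty → (∃ n : ℕ, a ^ (n + 1) = b * a ^ n) →
      modTC R p a N = modTC R p b N) :=
  ⟨modTC_anti p N hba, fun ⟨_, hda, hd⟩ ⟨_, hred⟩ => modTC_eq_of_reduction p N hba hda hd hred⟩

/-- **Proposition 1.3(4).** If `b ⊆ a` then `N^{*a}_M ⊆ N^{*b}_M`; if moreover
`a ∩ R° ≠ ∅` and `b` is a reduction of `a` then `N^{*a}_M = N^{*b}_M`. -/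
theorem tight_closure_antitone_and_eq_of_reduction
    (R : Type u) [CommRing R] [IsNoetherianRing R]
    (p : ℕ) [Fact p.Prime] [CharP R p]
    (a b : Ideal R) (hba : b ≤ a)
    (M : Type v) [AddCommGroup M] [Module R M] (N : Submodule R M) :
    modTC R p a N ⊆ modTC R p b N ∧
    (((a : Set R) ∩ Rcirc R).Nonempty → (∃ n : ℕ, a ^ (n + 1) = b * a ^ n) →
      modTC R p a N = modTC R p b N) :=
  tight_closure_antitone_and_eq_of_reduction_general R p a b hba M N
end

section
/- Let R ⊆ S be a pure extension of Noetherian commutative rings of prime characteristic p such that R° ⊆ S°. Then for any ideal a of R, one has τ(aS) ∩ R ⊆ τ(a). -/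
open TensorProduct

universe u v

/-!
If `z ∈ 0^{*a}_N`, then pushing the relations `c z^q a^q = 0` along the natural map
`F^e_R(N) → F^e_S(S ⊗_R N)` shows `1 ⊗ z ∈ 0^{*aS}_{S ⊗_R N}`, the same `c` serving as
multiplier because `R° ⊆ S°`. Hence `r (1 ⊗ z) = 1 ⊗ r z = 0` for `r ∈ τ(aS) ∩ R`, and
purity of `R → S` gives `r z = 0`.
-/

section FrobeniusFunctoriality

variable {R : Type u} [CommRing R] {p : ℕ} [Fact p.Prime] [CharP R p]

theorem bracketPow_bot (e : ℕ) (M : Type*) [AddCommGroup M] [Module R M] :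
    bracketPow R p e (⊥ : Submodule R M) = ⊥ :=
  Submodule.span_eq_bot.mpr fun _ ⟨m, hm, hx⟩ => by
    rw [← hx, (Submodule.mem_bot R).mp hm]
    exact TensorProduct.tmul_zero _ _

theorem mem_modTC_bot_iff {M : Type*} [AddCommGroup M] [Module R M] (a : Ideal R) (z : M) :
    z ∈ modTC R p a ⊥ ↔ ∃ c ∈ Rcirc R, ∃ e₀ : ℕ, ∀ e, e₀ ≤ e → ∀ α ∈ a ^ p ^ e,
      (c * α) • frobM R p e z = 0 := by
  simp only [modTC, bracketPow_bot, Submodule.mem_bot, Set.mem_ofPred_eq]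

variable {S : Type v} [CommRing S] [CharP S p] [Algebra R S]

def frobAlgMap (e : ℕ) : FrobAlg R p e →+* FrobAlg S p e := algebraMap R S

theorem frobAlgMap_smul (e : ℕ) (r : R) (x : FrobAlg R p e) :
    frobAlgMap e (r • x) = algebraMap R S r • (frobAlgMap e x : FrobAlg S p e) := by
  show algebraMap R S (iterateFrobenius R p e r * (show R from x))
    = iterateFrobenius S p e (algebraMap R S r) * algebraMap R S (show R from x)
  rw [iterateFrobenius_def, iterateFrobenius_def, map_mul, map_pow]

variable {N : Type*} [AddCommGroup N] [Module R N] {M : Type*} [AddCommGroup M] [Module S M]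

noncomputable def frobPowMap (e : ℕ) (φ : N →ₛₗ[algebraMap R S] M) :
    FrobPow R p e N →+ FrobPow S p e M :=
  TensorProduct.liftAddHom
    (AddMonoidHom.mk' (fun x =>
      AddMonoidHom.mk' (fun n => (frobAlgMap e x ⊗ₜ[S] φ n : FrobAlg S p e ⊗[S] M))
        (fun n₁ n₂ => by rw [map_add]; exact TensorProduct.tmul_add _ _ _))
      (fun x y => AddMonoidHom.ext fun n => by
        show frobAlgMap e (x + y) ⊗ₜ[S] φ n
          = frobAlgMap e x ⊗ₜ[S] φ n + frobAlgMap e y ⊗ₜ[S] φ n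
        rw [map_add]
        exact TensorProduct.add_tmul _ _ _))
    (fun r x n => by
      show frobAlgMap e (r • x) ⊗ₜ[S] φ n = frobAlgMap e x ⊗ₜ[S] φ (r • n)
      rw [frobAlgMap_smul, map_smulₛₗ, TensorProduct.smul_tmul])

theorem frobPowMap_smul_frobM (e : ℕ) (φ : N →ₛₗ[algebraMap R S] M) (r : R) (z : N) :
    frobPowMap e φ (r • frobM R p e z) = algebraMap R S r • frobM S p e (φ z) := by
  -- `R` acts on `F^e(N)` by multiplication in the left factor `ᵉR`, not through the
  -- Frobenius algebra structure of `ᵉR`, hence the explicit `R' := FrobAlg R p e`.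
  have hR : r • frobM R p e z = ((show FrobAlg R p e from r) ⊗ₜ[R] z : FrobAlg R p e ⊗[R] N) :=
    (TensorProduct.smul_tmul' (R' := FrobAlg R p e) _ _ _).trans
      (congrArg (· ⊗ₜ[R] z) (mul_one (show FrobAlg R p e from r)))
  have hS : algebraMap R S r • frobM S p e (φ z) =
      ((show FrobAlg S p e from algebraMap R S r) ⊗ₜ[S] φ z : FrobAlg S p e ⊗[S] M) :=
    (TensorProduct.smul_tmul' (R' := FrobAlg S p e) _ _ _).trans
      (congrArg (· ⊗ₜ[S] φ z) (mul_one (show FrobAlg S p e from algebraMap R S r)))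
  rw [hR, hS]
  exact TensorProduct.liftAddHom_tmul _ _ _ _

theorem mem_modTC_bot_of_semilinearMap (φ : N →ₛₗ[algebraMap R S] M)
    (hcirc : ∀ c ∈ Rcirc R, algebraMap R S c ∈ Rcirc S) {a : Ideal R} {z : N}
    (hz : z ∈ modTC R p a ⊥) : φ z ∈ modTC S p (a.map (algebraMap R S)) ⊥ := by
  rw [mem_modTC_bot_iff] at hz ⊢
  obtain ⟨c, hc, e₀, hcz⟩ := hz
  refine ⟨algebraMap R S c, hcirc c hc, e₀, fun e he β hβ => ?_⟩
  -- `(a S)^q = a^q S`, so it suffices to kill the generators `α ∈ a^q` of the ideal.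
  have hkill : (a ^ p ^ e).map (algebraMap R S) ≤
      LinearMap.ker (LinearMap.toSpanSingleton S _ (algebraMap R S c • frobM S p e (φ z))) := by
    refine Ideal.map_le_iff_le_comap.mpr fun α hα => ?_
    rw [Ideal.mem_comap, LinearMap.mem_ker, LinearMap.toSpanSingleton_apply, smul_smul,
      ← map_mul, mul_comm, ← frobPowMap_smul_frobM, hcz e he α hα, map_zero]
  rw [Ideal.map_pow] at hkill
  rw [mul_comm, mul_smul]
  exact hkill hβ

end FrobeniusFunctoriality

section BaseChange

variable (R : Type*) (S : Type*) (N : Type*) [CommRing R] [CommRing S] [Algebra R S]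
  [AddCommGroup N] [Module R N]

def oneTmulₛₗ : N →ₛₗ[algebraMap R S] S ⊗[R] N where
  toFun n := 1 ⊗ₜ n
  map_add' := TensorProduct.tmul_add 1
  map_smul' r n := by
    rw [← TensorProduct.smul_tmul, Algebra.smul_def, mul_one,
      TensorProduct.smul_tmul', smul_eq_mul, mul_one]

variable {R S N}

theorem eq_zero_of_one_tmul_eq_zero
    (hpure : Function.Injective fun m : N => m ⊗ₜ[R] (1 : S)) {m : N}
    (h : (1 : S) ⊗ₜ[R] m = 0) : m = 0 :=
  hpure <| by simpa using congrArg (TensorProduct.comm R S N) h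

end BaseChange

theorem tau_map_comap_le_tau_of_pure_general
    (R : Type u) (S : Type v) [CommRing R] [CommRing S]
    (p : ℕ) [Fact p.Prime] [CharP R p] [CharP S p]
    [Algebra R S]
    (hpure : ∀ (M : Type u) [AddCommGroup M] [Module R M],
      Function.Injective fun m : M => (m ⊗ₜ[R] (1 : S) : TensorProduct R M S))
    (hcirc : ∀ c ∈ Rcirc R, algebraMap R S c ∈ Rcirc S)
    (a : Ideal R) :
    Ideal.comap (algebraMap R S) (tauIdeal S p (a.map (algebraMap R S))) ≤
      tauIdeal R p a := by
  intro r hr N _ _ _ z hz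
  -- `S ⊗[R] N` lives in a larger universe than the modules tested by `τ(aS)`.
  have : Small.{v} (S ⊗[R] N) := Module.Finite.small S _
  let φ : N →ₛₗ[algebraMap R S] Shrink.{v} (S ⊗[R] N) :=
    (Shrink.linearEquiv S _).symm.toLinearMap.comp (oneTmulₛₗ R S N)
  have hφ : φ (r • z) = 0 := by
    rw [map_smulₛₗ]
    exact Ideal.mem_comap.mp hr _ inferInstance _ (mem_modTC_bot_of_semilinearMap φ hcirc hz)
  exact eq_zero_of_one_tmul_eq_zero (hpure N) <|
    (Shrink.linearEquiv S _).symm.injective (hφ.trans (map_zero _).symm)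

/-- **Proposition 1.12.** If `R ⊆ S` is a pure extension of Noetherian rings of prime
characteristic `p` with `R° ⊆ S°`, then `τ(aS) ∩ R ⊆ τ(a)` for every ideal `a` of `R`. -/
theorem tau_map_comap_le_tau_of_pure
    (R : Type u) (S : Type v) [CommRing R] [CommRing S]
    [IsNoetherianRing R] [IsNoetherianRing S]
    (p : ℕ) [Fact p.Prime] [CharP R p] [CharP S p]
    [Algebra R S] (hinj : Function.Injective (algebraMap R S))
    (hpure : ∀ (M : Type u) [AddCommGroup M] [Module R M],
      Function.Injective fun m : M => (m ⊗ₜ[R] (1 : S) : TensorProduct R M S))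
    (hcirc : ∀ c ∈ Rcirc R, algebraMap R S c ∈ Rcirc S)
    (a : Ideal R) :
    Ideal.comap (algebraMap R S) (tauIdeal S p (a.map (algebraMap R S))) ≤
      tauIdeal R p a :=
  tau_map_comap_le_tau_of_pure_general R S p hpure hcirc a
end

section
/- Let (R, m) be a Noetherian local ring and let x_1, …, x_d ∈ m be a regular sequence. Then for all integers l, r ≥ 1, one has the equality of ideals (x_1^l, …, x_d^l) : (x_1, …, x_d)^r = (x_1, …, x_d)^{dl-r-d+1} + (x_1^l, …, x_d^l), where by convention (x_1, …, x_d)^k = R whenever k ≤ 0. -/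
open TensorProduct

universe u v

/-! The inclusion `⊇` is the pigeonhole bound `J ^ (d (l - 1) + 1) ⊆ K`, where
`J = (x_1, …, x_d)` and `K = (x_1^l, …, x_d^l)`. For `⊆` induct on `d`, splitting off the first
element `y` of the sequence; let `J'`, `K'` be the ideals of the remaining elements and of their
`l`-th powers. Modulo `y` the remaining elements still form a regular sequence, so the induction
hypothesis computes `(K' + (y)) : J'^s`. Since regular sequences in a Noetherian local ring may be
permuted and their elements raised to powers, `y` is regular modulo `K'`, hence
`(K' + (y^(q+1))) : y = K' + (y^q)`. An induction on `q` then computes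
`(K' + (y^q)) : (J' + (y))^r`: by the case `(q - 1, r - 1)` an element of it has the form
`a + c y^(q-1) + b` with `a` in the expected power of `J` and `b ∈ K'`; pigeonhole kills `a J'^r`,
so `c J'^r ⊆ K' + (y)`, and the case modulo `y` bounds `c`. -/

section ColonOfRegularSequence

open Ideal IsLocalRing

variable {R : Type*} [CommRing R]

theorem Ideal.sup_pow_le_pow_sup_pow (I J : Ideal R) {k m n : ℕ} (h : m + n ≤ k + 1) :
    (I ⊔ J) ^ k ≤ I ^ m ⊔ J ^ n := by
  rw [← Ideal.add_eq_sup, ← Ideal.add_eq_sup, add_pow, Ideal.sum_eq_sup]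
  refine Finset.sup_le fun i hi => Ideal.mul_le_left.trans ?_
  rw [Finset.mem_range] at hi
  by_cases hm : m ≤ i
  · exact Ideal.mul_le_left.trans ((Ideal.pow_le_pow_right hm).trans le_sup_left)
  · exact Ideal.mul_le_right.trans ((Ideal.pow_le_pow_right (by omega)).trans le_sup_right)

theorem Ideal.span_singleton_sup_pow_le {J K : Ideal R} {y : R} {D : ℕ} (hJ : J ^ (D + 1) ≤ K)
    (q : ℕ) : (span {y} ⊔ J) ^ (q + D + 1) ≤ span {y ^ (q + 1)} ⊔ K := by
  rw [← span_singleton_pow]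
  exact (sup_pow_le_pow_sup_pow _ _ (by omega)).trans (sup_le_sup_left hJ _)

theorem Ideal.ofList_pow_le_ofList_map_pow (l : ℕ) :
    ∀ L : List R, ofList L ^ (L.length * (l - 1) + 1) ≤ ofList (L.map (· ^ l))
  | [] => by simp
  | a :: L => by
    rw [ofList_cons, List.map_cons, ofList_cons, ← span_singleton_pow]
    refine (sup_pow_le_pow_sup_pow _ _ ?_).trans
      (sup_le_sup_left (ofList_pow_le_ofList_map_pow l L) _)
    simp only [List.length_cons, add_mul, one_mul]
    omega

theorem Ideal.ofList_ofFn {n : ℕ} (f : Fin n → R) : ofList (List.ofFn f) = span (Set.range f) :=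
  congrArg span (Set.ext fun a => List.mem_ofFn' f a)

theorem Ideal.pow_sub_sup_le_colon_pow {J K : Ideal R} {N : ℕ} (h : J ^ N ≤ K) (r : ℕ) :
    J ^ (N - r) ⊔ K ≤ K.colon ↑(J ^ r) := by
  refine sup_le (fun z hz => Submodule.mem_colon.mpr fun m hm => h ?_) le_colon
  exact Ideal.pow_le_pow_right (by omega) (pow_add J (N - r) r ▸ mul_mem_mul hz hm)

theorem Ideal.mem_span_pow_sup_of_pow_mul_mem {K : Ideal R} {y z : R}
    (hy : IsSMulRegular (R ⧸ K) y) {p q : ℕ} (h : y ^ p * z ∈ span {y ^ (p + q)} ⊔ K) :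
    z ∈ span {y ^ q} ⊔ K := by
  obtain ⟨c, k, hk, hck⟩ := mem_span_singleton_sup.mp h
  have hyk : y ^ p * (z - c * y ^ q) = k := by linear_combination -hck
  have : z - c * y ^ q ∈ K := mem_of_isSMulRegular_quotient_of_smul_mem (hy.pow p)
    (show y ^ p * (z - c * y ^ q) ∈ K from hyk ▸ hk)
  exact mem_span_singleton_sup.mpr ⟨c, _, this, by ring⟩

theorem Ideal.colon_pow_succ_le_colon_pow {K J : Ideal R} {y : R}
    (hy : IsSMulRegular (R ⧸ K) y) (hyJ : y ∈ J) (q r : ℕ) :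
    (span {y ^ (q + 1)} ⊔ K).colon ↑(J ^ (r + 1)) ≤ (span {y ^ q} ⊔ K).colon ↑(J ^ r) := by
  refine fun z hz => Submodule.mem_colon.mpr fun m hm =>
    mem_span_pow_sup_of_pow_mul_mem hy (p := 1) ?_
  have := Submodule.mem_colon.mp hz (y * m) (pow_succ' J r ▸ mul_mem_mul hyJ hm)
  rw [pow_one, add_comm 1 q]
  simpa only [smul_eq_mul, mul_left_comm] using this

theorem Ideal.span_pow_sup_colon_le {K J : Ideal R} {y : R} {D : ℕ}
    (hy : IsSMulRegular (R ⧸ K) y) (hJ : J ^ (D + 1) ≤ K)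
    (hquot : ∀ s, (span {y} ⊔ K).colon ↑(J ^ s) ≤ J ^ (D + 1 - s) ⊔ (span {y} ⊔ K))
    (q r : ℕ) :
    (span {y ^ q} ⊔ K).colon ↑((span {y} ⊔ J) ^ r) ≤
      (span {y} ⊔ J) ^ (D + q - r) ⊔ (span {y ^ q} ⊔ K) := by
  set J₁ := span {y} ⊔ J
  have hy₁ : y ∈ J₁ := mem_sup_left (mem_span_singleton_self y)
  have hJJ₁ : J ≤ J₁ := le_sup_right
  induction q generalizing r with
  | zero => simp
  | succ q ih =>
    intro z hz
    cases r with
    | zero => exact mem_sup_right (by simpa using Submodule.mem_colon.mp hz 1 (by simp))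
    | succ r =>
    obtain ⟨a, ha, w, hw, rfl⟩ :=
      Submodule.mem_sup.mp (ih r (colon_pow_succ_le_colon_pow hy hy₁ q r hz))
    obtain ⟨c, b, hb, rfl⟩ := mem_span_singleton_sup.mp hw
    have hc : c ∈ (span {y} ⊔ K).colon ↑(J ^ (r + 1)) := by
      refine Submodule.mem_colon.mpr fun m hm => ?_
      have hm₁ : m ∈ J₁ ^ (r + 1) := pow_right_mono hJJ₁ _ hm
      have ham : a * m ∈ span {y ^ (q + 1)} ⊔ K := by
        have := mul_mem_mul ha hm₁
        rw [← pow_add] at this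
        exact span_singleton_sup_pow_le hJ q (pow_le_pow_right (by omega) this)
      rw [smul_eq_mul, ← pow_one y]
      refine mem_span_pow_sup_of_pow_mul_mem hy (p := q) ?_
      rw [show y ^ q * (c * m) = (a + (c * y ^ q + b)) * m - a * m - b * m by ring]
      exact sub_mem (sub_mem (Submodule.mem_colon.mp hz m hm₁) ham)
        (mem_sup_right (mul_mem_right _ _ hb))
    obtain ⟨a', ha', w', hw', rfl⟩ := Submodule.mem_sup.mp (hquot (r + 1) hc)
    obtain ⟨t, b', hb', rfl⟩ := mem_span_singleton_sup.mp hw'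
    have ha'y : a' * y ^ q ∈ J₁ ^ (D + q - r) := by
      have := mul_mem_mul (pow_right_mono hJJ₁ _ ha') (pow_mem_pow hy₁ q)
      rw [← pow_add] at this
      exact pow_le_pow_right (by omega) this
    rw [show D + (q + 1) - (r + 1) = D + q - r by omega,
      show a + ((a' + (t * y + b')) * y ^ q + b) =
        (a + a' * y ^ q) + (t * y ^ (q + 1) + (b' * y ^ q + b)) by ring]
    exact add_mem (mem_sup_left (add_mem ha ha'y))
      (mem_sup_right (mem_span_singleton_sup.mpr ⟨t, _, add_mem (mul_mem_right _ _ hb') hb, rfl⟩))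

-- Nakayama's lemma, applied to the colon ideal `I : b`.
theorem isSMulRegular_of_isSMulRegular_sup_span [IsLocalRing R] [IsNoetherianRing R]
    {I : Ideal R} {a b : R} (ha : a ∈ maximalIdeal R) (hA : IsSMulRegular (R ⧸ I) a)
    (hB : IsSMulRegular (R ⧸ (span {a} ⊔ I)) b) : IsSMulRegular (R ⧸ I) b := by
  suffices I.colon {b} ≤ I from (isSMulRegular_quotient_iff_mem_of_smul_mem _ _).mpr
    fun z hz => this (Submodule.mem_colon_singleton.mpr (by simpa [mul_comm] using hz))
  refine Submodule.le_of_le_smul_of_le_jacobson_bot (I := span {a}) (IsNoetherian.noetherian _)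
    ((span_singleton_le_iff_mem _).mpr ?_) fun z hz => ?_
  · rwa [jacobson_eq_maximalIdeal ⊥ bot_ne_top]
  have hzb : b * z ∈ I := by simpa [mul_comm] using Submodule.mem_colon_singleton.mp hz
  obtain ⟨c, u, hu, rfl⟩ :=
    mem_span_singleton_sup.mp (mem_of_isSMulRegular_quotient_of_smul_mem hB (mem_sup_right hzb))
  have hc : c ∈ I.colon {b} := by
    refine Submodule.mem_colon_singleton.mpr (mem_of_isSMulRegular_quotient_of_smul_mem hA ?_)
    rw [show a • c • b = b * (c * a + u) - u * b by simp only [smul_eq_mul]; ring]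
    exact sub_mem hzb (mul_mem_right _ _ hu)
  exact Submodule.mem_sup.mpr ⟨u, hu, a • c,
    Submodule.smul_mem_smul (mem_span_singleton_self a) hc, by rw [smul_eq_mul]; ring⟩

theorem isSMulRegular_sup_span_of_isSMulRegular_sup_span {I : Ideal R} {a b : R}
    (hA : IsSMulRegular (R ⧸ I) a) (hB : IsSMulRegular (R ⧸ (span {a} ⊔ I)) b) :
    IsSMulRegular (R ⧸ (span {b} ⊔ I)) a := by
  refine (isSMulRegular_quotient_iff_mem_of_smul_mem _ _).mpr fun z hz => ?_
  obtain ⟨c, u, hu, hcu⟩ := mem_span_singleton_sup.mp hz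
  rw [smul_eq_mul] at hcu
  have hc : b * c ∈ span {a} ⊔ I :=
    mem_span_singleton_sup.mpr ⟨z, -u, neg_mem hu, by linear_combination -hcu⟩
  obtain ⟨e, u', hu', rfl⟩ :=
    mem_span_singleton_sup.mp (mem_of_isSMulRegular_quotient_of_smul_mem hB hc)
  have : z - e * b ∈ I := by
    refine mem_of_isSMulRegular_quotient_of_smul_mem hA ?_
    rw [show a • (z - e * b) = u' * b + u by rw [smul_eq_mul]; linear_combination -hcu]
    exact add_mem (mul_mem_right _ _ hu') hu
  exact mem_span_singleton_sup.mpr ⟨e, _, this, by ring⟩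

theorem isSMulRegular_span_pow_sup {I : Ideal R} {a b : R}
    (hA : IsSMulRegular (R ⧸ I) a) (hB : IsSMulRegular (R ⧸ (span {a} ⊔ I)) b) (n : ℕ) :
    IsSMulRegular (R ⧸ (span {a ^ n} ⊔ I)) b := by
  refine (isSMulRegular_quotient_iff_mem_of_smul_mem _ _).mpr fun z hz => ?_
  induction n generalizing z with
  | zero => simp
  | succ n ih =>
    have hle : span {a ^ (n + 1)} ⊔ I ≤ span {a ^ n} ⊔ I :=
      sup_le_sup_right (span_singleton_le_span_singleton.mpr (pow_dvd_pow a n.le_succ)) _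
    obtain ⟨c, u, hu, rfl⟩ := mem_span_singleton_sup.mp (ih z (hle hz))
    have hbc : b * c ∈ span {a} ⊔ I := by
      rw [← pow_one a]
      refine mem_span_pow_sup_of_pow_mul_mem hA (p := n) ?_
      rw [show a ^ n * (b * c) = b • (c * a ^ n + u) - b * u by rw [smul_eq_mul]; ring]
      exact sub_mem hz (mem_sup_right (mul_mem_left _ _ hu))
    obtain ⟨e, u', hu', rfl⟩ :=
      mem_span_singleton_sup.mp (mem_of_isSMulRegular_quotient_of_smul_mem hB hbc)
    exact mem_span_singleton_sup.mpr
      ⟨e, u' * a ^ n + u, add_mem (mul_mem_right _ _ hu') hu, by ring⟩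

/-- `IsWeaklyRegularMod I L`: the list `L` is a weakly regular sequence on `R ⧸ I`, i.e.
`RingTheory.Sequence.IsWeaklyRegular (R ⧸ I) L`, phrased through ideals of `R` so that passing
to `R ⧸ (a)` only enlarges `I`. -/
def IsWeaklyRegularMod (I : Ideal R) : List R → Prop
  | [] => True
  | a :: L => IsSMulRegular (R ⧸ I) a ∧ IsWeaklyRegularMod (span {a} ⊔ I) L

theorem Fin.image_lt_succ {α : Type*} {n : ℕ} (x : Fin (n + 1) → α) (i : Fin n) :
    x '' {j | j < i.succ} = insert (x 0) ((fun j => x j.succ) '' {j | j < i}) := by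
  ext t
  simp only [Set.mem_image, Set.mem_ofPred_eq, Set.mem_insert_iff, Fin.exists_fin_succ,
    Fin.succ_lt_succ_iff, Fin.succ_pos, true_and]
  tauto

theorem isWeaklyRegularMod_ofFn : ∀ {n : ℕ} (I : Ideal R) (x : Fin n → R),
    (∀ i, IsSMulRegular (R ⧸ (span (x '' {j | j < i}) ⊔ I)) (x i)) →
    IsWeaklyRegularMod I (List.ofFn x)
  | 0, _, _, _ => trivial
  | n + 1, I, x, h => by
    rw [List.ofFn_succ]
    refine ⟨?_, isWeaklyRegularMod_ofFn _ _ fun i => ?_⟩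
    · have h0 := h 0
      rwa [show {j : Fin (n + 1) | j < 0} = ∅ from Set.eq_empty_of_forall_notMem Fin.not_lt_zero,
        Set.image_empty, span_empty, bot_sup_eq] at h0
    · have := h i.succ
      rwa [Fin.image_lt_succ, span_insert, sup_assoc, sup_left_comm] at this

namespace IsWeaklyRegularMod

theorem of_append {B : List R} : ∀ {A : List R} {I : Ideal R},
    IsWeaklyRegularMod I (A ++ B) → IsWeaklyRegularMod I A
  | [], _, _ => trivial
  | _ :: _, _, h => ⟨h.1, of_append h.2⟩

variable [IsLocalRing R] [IsNoetherianRing R]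

theorem swap {I : Ideal R} {a b : R} {L : List R} (ha : a ∈ maximalIdeal R)
    (h : IsWeaklyRegularMod I (a :: b :: L)) : IsWeaklyRegularMod I (b :: a :: L) :=
  ⟨isSMulRegular_of_isSMulRegular_sup_span ha h.1 h.2.1,
    isSMulRegular_sup_span_of_isSMulRegular_sup_span h.1 h.2.1,
    sup_left_comm (span {b}) (span {a}) I ▸ h.2.2⟩

theorem perm {L L' : List R} (hp : L.Perm L') {I : Ideal R} (h : IsWeaklyRegularMod I L)
    (hm : ∀ a ∈ L, a ∈ maximalIdeal R) : IsWeaklyRegularMod I L' := by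
  induction hp generalizing I with
  | nil => exact h
  | cons a _ ih => exact ⟨h.1, ih h.2 fun b hb => hm b (List.mem_cons_of_mem a hb)⟩
  | swap a b _ => exact h.swap (hm b List.mem_cons_self)
  | trans p₁ _ ih₁ ih₂ => exact ih₂ (ih₁ h hm) fun b hb => hm b (p₁.mem_iff.mpr hb)

theorem isSMulRegular_ofList_map_pow_sup (n : ℕ) : ∀ {L : List R} {I : Ideal R} {y : R},
    IsWeaklyRegularMod I (y :: L) → (∀ a ∈ y :: L, a ∈ maximalIdeal R) →
    IsSMulRegular (R ⧸ (ofList (L.map (· ^ n)) ⊔ I)) y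
  | [], _, _, h, _ => by
    rw [List.map_nil, ofList_nil, bot_sup_eq]
    exact h.1
  | a :: L, I, y, h, hm => by
    have h' := h.swap (hm y List.mem_cons_self)
    have hm' : ∀ b ∈ a :: y :: L, b ∈ maximalIdeal R :=
      fun b hb => hm b ((List.Perm.swap y a L).mem_iff.mp hb)
    have hy := isSMulRegular_ofList_map_pow_sup n h'.2
      fun b hb => hm' b (List.mem_cons_of_mem a hb)
    have ha := isSMulRegular_ofList_map_pow_sup n
      (h'.perm (.cons a (List.perm_append_singleton y L).symm) hm').of_append
      fun b hb => hm b (List.mem_cons_of_mem y hb)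
    rw [sup_left_comm] at hy
    rw [List.map_cons, ofList_cons, sup_assoc]
    exact isSMulRegular_span_pow_sup ha hy n

theorem colon_ofList_pow_le {l : ℕ} (hl : 1 ≤ l) :
    ∀ {L : List R} {I : Ideal R}, IsWeaklyRegularMod I L → (∀ a ∈ L, a ∈ maximalIdeal R) →
    ∀ r, (ofList (L.map (· ^ l)) ⊔ I).colon ↑(ofList L ^ r) ≤
      ofList L ^ (L.length * (l - 1) + 1 - r) ⊔ (ofList (L.map (· ^ l)) ⊔ I)
  | [], I, _, _, r => by cases r <;> simp
  | a :: L, I, h, hm, r => by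
    have hquot (s : ℕ) := colon_ofList_pow_le hl h.2
      (fun b hb => hm b (List.mem_cons_of_mem a hb)) s
    simp only [sup_left_comm (ofList (L.map (· ^ l))) (span {a}) I] at hquot
    have := span_pow_sup_colon_le (h.isSMulRegular_ofList_map_pow_sup l hm)
      ((ofList_pow_le_ofList_map_pow l L).trans le_sup_left) hquot l r
    rwa [List.map_cons, ofList_cons, ofList_cons, sup_assoc, List.length_cons,
      show (L.length + 1) * (l - 1) + 1 - r = L.length * (l - 1) + l - r by
        rw [add_mul, one_mul]; omega]

theorem colon_ofList_pow {l : ℕ} (hl : 1 ≤ l) {L : List R} {I : Ideal R}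
    (h : IsWeaklyRegularMod I L) (hm : ∀ a ∈ L, a ∈ maximalIdeal R) (r : ℕ) :
    (ofList (L.map (· ^ l)) ⊔ I).colon ↑(ofList L ^ r) =
      ofList L ^ (L.length * (l - 1) + 1 - r) ⊔ (ofList (L.map (· ^ l)) ⊔ I) :=
  (h.colon_ofList_pow_le hl hm r).antisymm
    (pow_sub_sup_le_colon_pow ((ofList_pow_le_ofList_map_pow l L).trans le_sup_left) r)

end IsWeaklyRegularMod

end ColonOfRegularSequence

theorem colon_pow_of_regular_sequence_general
    (R : Type u) [CommRing R] [IsLocalRing R] [IsNoetherianRing R]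
    (d : ℕ) (x : Fin d → R) (hxm : ∀ i, x i ∈ IsLocalRing.maximalIdeal R)
    (hreg : IsRegSeq R x) (l r : ℕ) (hl : 1 ≤ l) :
    (Ideal.span (Set.range fun i => x i ^ l)).colon (((Ideal.span (Set.range x)) ^ r : Ideal R) : Set R) =
      (if (d * l : ℤ) - r - d + 1 ≤ 0 then (⊤ : Ideal R)
        else (Ideal.span (Set.range x)) ^ ((d * l : ℤ) - r - d + 1).toNat) ⊔
        Ideal.span (Set.range fun i => x i ^ l) := by
  have hx : IsWeaklyRegularMod ⊥ (List.ofFn x) := isWeaklyRegularMod_ofFn ⊥ x fun i =>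
    (isSMulRegular_quotient_iff_mem_of_smul_mem _ _).mpr fun z hz => by
      simpa using hreg i z (by simpa using hz)
  have hm : ∀ a ∈ List.ofFn x, a ∈ IsLocalRing.maximalIdeal R := fun a ha => by
    obtain ⟨i, rfl⟩ := (List.mem_ofFn' x a).mp ha
    exact hxm i
  have key := hx.colon_ofList_pow hl hm r
  rw [List.map_ofFn, List.length_ofFn, sup_bot_eq, Ideal.ofList_ofFn, Ideal.ofList_ofFn,
    Function.comp_def] at key
  rw [key, show (d * l : ℤ) - r - d + 1 = ((d * (l - 1) + 1 : ℕ) : ℤ) - r by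
    push_cast [Nat.cast_sub hl]; ring]
  generalize d * (l - 1) + 1 = N
  split_ifs with hN
  · rw [Nat.sub_eq_zero_of_le (by omega), pow_zero, Ideal.one_eq_top]
  · congr 2
    omega

/-- **Lemma 2.11.** For a regular sequence `x_1, …, x_d` in a Noetherian local ring,
`(x_1^l, …, x_d^l) : (x_1, …, x_d)^r = (x_1, …, x_d)^{dl-r-d+1} + (x_1^l, …, x_d^l)`
for all `l, r ≥ 1`, with the convention `J^k = R` for `k ≤ 0`. -/
theorem colon_pow_of_regular_sequence
    (R : Type u) [CommRing R] [IsLocalRing R] [IsNoetherianRing R]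
    (d : ℕ) (x : Fin d → R) (hxm : ∀ i, x i ∈ IsLocalRing.maximalIdeal R)
    (hreg : IsRegSeq R x) (l r : ℕ) (hl : 1 ≤ l) (hr : 1 ≤ r) :
    (Ideal.span (Set.range fun i => x i ^ l)).colon (((Ideal.span (Set.range x)) ^ r : Ideal R) : Set R) =
      (if (d * l : ℤ) - r - d + 1 ≤ 0 then (⊤ : Ideal R)
        else (Ideal.span (Set.range x)) ^ ((d * l : ℤ) - r - d + 1).toNat) ⊔
        Ideal.span (Set.range fun i => x i ^ l) :=
  colon_pow_of_regular_sequence_general R d x hxm hreg l r hl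
end
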